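/- arXiv:1811.02556 — 2 statements merged into one kernel-verified Lean document; each statement's English description precedes it below -/
import Mathlib

section
/- There exists x_0 such that for every real number x ≥ x_0 and every real number y with (log x)² ≤ y ≤ exp(log x / log log x), one has Ψ(x, y) ≤ x·exp(−(1/2)·(log x / log y)·log(log x / log y)), where Ψ(x, y) = #{n ≤ x : every prime factor of n is ≤ y} is the number of y-smooth positive integers up to x. -/
/-!
Rankin's trick with `σ = 1 - δ`:
`Ψ(x, y) ≤ x ^ σ ∑_{P(n) ≤ y} n ^ (-σ) = x ^ σ ∏_{p ≤ y} (1 - p ^ (-σ))⁻¹`,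
and `(1 - t)⁻¹ ≤ exp (4 t)` turns the product into `exp (4 ∑_{p ≤ y} p ^ (-σ))`. Grouping the
primes dyadically and using Chebyshev's bound `#{p ∈ [2^k, 2^(k+1))} ≤ 2^(k+2) / k` gives
`∑_{p ≤ y} p ^ (-σ) ≤ 4 ∑_{k ≤ K} 2 ^ (δ k) / k ≤ 4 (1 + log K + 2 ^ (δ K))` with `K = log₂ y`.
For `u = log x / log y` and `δ = log u / log y` one has `2 ^ (δ K) ≤ y ^ δ = u` and
`x ^ σ = x exp (-u log u)`, while the range of `y` forces `log K ≤ log log x ≤ u`, so the error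
`O(u)` is absorbed by half of `u log u`.
-/

/-- `Ψ(x, y)`: the number of positive integers `n ≤ x` all of whose prime
factors are at most `y`. -/
noncomputable def smoothCount (x y : ℝ) : ℕ :=
  ((Finset.Icc 1 ⌊x⌋₊).filter
    (fun n => ∀ p : ℕ, p ∈ n.primeFactors → (p : ℝ) ≤ y)).card

open Finset Real

noncomputable def rpowNegHom (σ : ℝ) : ℕ →* ℝ where
  toFun n := (n : ℝ) ^ (-σ)
  map_one' := by simp
  map_mul' m n := by push_cast; exact mul_rpow (Nat.cast_nonneg _) (Nat.cast_nonneg _)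

lemma sum_rpow_neg_le_prod_primesBelow {σ : ℝ} (hσ : 0 < σ) {N : ℕ} {S : Finset ℕ}
    (hS : ↑S ⊆ N.smoothNumbers) :
    ∑ n ∈ S, (n : ℝ) ^ (-σ) ≤ ∏ p ∈ N.primesBelow, (1 - (p : ℝ) ^ (-σ))⁻¹ := by
  have hlt {p : ℕ} (hp : p.Prime) : ‖rpowNegHom σ p‖ < 1 := by
    change ‖(p : ℝ) ^ (-σ)‖ < 1
    rw [norm_of_nonneg (rpow_nonneg p.cast_nonneg _)]
    exact rpow_lt_one_of_one_lt_of_neg (by exact_mod_cast hp.one_lt) (neg_neg_of_pos hσ)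
  have hsum := hasSum_subtype_iff_indicator.mp
    (EulerProduct.summable_and_hasSum_smoothNumbers_prod_primesBelow_geometric hlt N).2
  calc ∑ n ∈ S, (n : ℝ) ^ (-σ) = ∑ n ∈ S, N.smoothNumbers.indicator (rpowNegHom σ) n :=
        sum_congr rfl fun n hn => (Set.indicator_of_mem (hS hn) (rpowNegHom σ)).symm
    _ ≤ _ := sum_le_hasSum S (fun n _ => Set.indicator_nonneg
        (fun n _ => rpow_nonneg n.cast_nonneg _) n) hsum

lemma mem_smoothNumbers_of_primeFactors_le {y : ℝ} {n : ℕ} (hn : n ≠ 0)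
    (h : ∀ p ∈ n.primeFactors, (p : ℝ) ≤ y) : n ∈ (⌊y⌋₊ + 1).smoothNumbers :=
  Nat.mem_smoothNumbers_of_primeFactors_subset hn fun p hp =>
    mem_range.mpr (Nat.lt_succ_of_le (Nat.le_floor (h p hp)))

-- Rankin's trick: each `n ≤ x` contributes `1 ≤ (x / n) ^ σ`.
lemma smoothCount_le_rpow_mul_prod_primesBelow {x : ℝ} (hx : 0 ≤ x) (y : ℝ) {σ : ℝ}
    (hσ : 0 < σ) :
    (smoothCount x y : ℝ) ≤
      x ^ σ * ∏ p ∈ (⌊y⌋₊ + 1).primesBelow, (1 - (p : ℝ) ^ (-σ))⁻¹ := by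
  set S := {n ∈ Icc 1 ⌊x⌋₊ | ∀ p : ℕ, p ∈ n.primeFactors → (p : ℝ) ≤ y}
  have hS : ↑S ⊆ (⌊y⌋₊ + 1).smoothNumbers := fun n hn => by
    simp only [S, mem_coe, mem_filter, mem_Icc] at hn
    exact mem_smoothNumbers_of_primeFactors_le (by omega) hn.2
  calc (smoothCount x y : ℝ) = ∑ n ∈ S, (1 : ℝ) := by simp [smoothCount, S]
    _ ≤ ∑ n ∈ S, x ^ σ * (n : ℝ) ^ (-σ) := sum_le_sum fun n hn => by
        simp only [S, mem_filter, mem_Icc] at hn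
        have hn0 : (0 : ℝ) < n := by exact_mod_cast hn.1.1
        have hnx : (n : ℝ) ≤ x := (Nat.cast_le.mpr hn.1.2).trans (Nat.floor_le hx)
        rw [rpow_neg hn0.le, ← div_eq_mul_inv, ← div_rpow hx hn0.le]
        exact one_le_rpow ((one_le_div hn0).mpr hnx) hσ.le
    _ = x ^ σ * ∑ n ∈ S, (n : ℝ) ^ (-σ) := (mul_sum _ _ _).symm
    _ ≤ _ := by
        gcongr
        exact sum_rpow_neg_le_prod_primesBelow hσ hS

lemma inv_one_sub_le_exp {t : ℝ} (h0 : 0 ≤ t) (h1 : t ≤ 3 / 4) : (1 - t)⁻¹ ≤ exp (4 * t) := by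
  calc (1 - t)⁻¹ ≤ 1 + 4 * t := by
        rw [inv_le_iff_one_le_mul₀' (by linarith)]
        nlinarith
    _ ≤ exp (4 * t) := by linarith [add_one_le_exp (4 * t)]

lemma prod_inv_one_sub_le_exp_sum {ι : Type*} {s : Finset ι} {f : ι → ℝ}
    (h0 : ∀ i ∈ s, 0 ≤ f i) (h1 : ∀ i ∈ s, f i ≤ 3 / 4) :
    ∏ i ∈ s, (1 - f i)⁻¹ ≤ exp (4 * ∑ i ∈ s, f i) := by
  rw [mul_sum, exp_sum]
  exact prod_le_prod (fun i hi => inv_nonneg.mpr (by linarith [h1 i hi]))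
    fun i hi => inv_one_sub_le_exp (h0 i hi) (h1 i hi)

lemma rpow_neg_le_three_quarters {p σ : ℝ} (hp : 2 ≤ p) (hσ : 1 / 2 ≤ σ) :
    p ^ (-σ) ≤ 3 / 4 := by
  have hsqrt : (4 / 3 : ℝ) ≤ √2 := Real.le_sqrt_of_sq_le (by norm_num)
  calc p ^ (-σ) ≤ 2 ^ (-σ) := rpow_le_rpow_of_nonpos (by norm_num) hp (by linarith)
    _ ≤ 2 ^ (-(1 / 2) : ℝ) := rpow_le_rpow_of_exponent_le (by norm_num) (by linarith)
    _ = (√2)⁻¹ := by rw [rpow_neg zero_le_two, sqrt_eq_rpow]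
    _ ≤ 3 / 4 := by rw [inv_le_comm₀ (by positivity) (by norm_num)]; linarith

/-- Chebyshev: the primes in `[2^k, 2^(k+1))` divide the primorial of `2^(k+1)`, which is at most
`4 ^ 2^(k+1)`. -/
lemma card_primes_Ico_two_pow_mul_le (k : ℕ) :
    #{p ∈ Ico (2 ^ k) (2 ^ (k + 1)) | p.Prime} * k ≤ 2 ^ (k + 2) := by
  set B := {p ∈ Ico (2 ^ k) (2 ^ (k + 1)) | p.Prime}
  have hB : (2 ^ k) ^ #B ≤ primorial (2 ^ (k + 1)) :=
    calc (2 ^ k) ^ #B ≤ ∏ p ∈ B, p := by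
          rw [← prod_const]
          exact prod_le_prod' fun p hp => (mem_Ico.mp (mem_filter.mp hp).1).1
      _ ≤ primorial (2 ^ (k + 1)) :=
          prod_le_prod_of_subset_of_one_le' (fun p hp => by
            simp only [B, mem_filter, mem_Ico, mem_range] at hp ⊢
            exact ⟨by omega, hp.2⟩) fun p hp _ => (mem_filter.mp hp).2.one_lt.le
  refine (Nat.pow_le_pow_iff_right one_lt_two).mp ?_
  calc 2 ^ (#B * k) = (2 ^ k) ^ #B := by rw [mul_comm, pow_mul]
    _ ≤ 4 ^ 2 ^ (k + 1) := hB.trans (primorial_le_four_pow _)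
    _ = 2 ^ 2 ^ (k + 2) := by rw [show 4 = 2 ^ 2 by rfl, ← pow_mul, pow_succ 2 (k + 1)]; ring_nf

lemma sum_primes_log_two_eq_rpow_neg_le {σ : ℝ} (hσ : 0 ≤ σ) {P : Finset ℕ}
    (hP : ∀ p ∈ P, p.Prime) {k : ℕ} (hk : 1 ≤ k) :
    ∑ p ∈ P with Nat.log 2 p = k, (p : ℝ) ^ (-σ) ≤ 4 * (2 ^ (1 - σ) : ℝ) ^ k / k := by
  set F := {p ∈ P | Nat.log 2 p = k}
  have hk0 : (0 : ℝ) < k := by exact_mod_cast hk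
  have hF : #F * k ≤ 2 ^ (k + 2) := by
    refine le_trans (Nat.mul_le_mul_right k (card_le_card fun p hp => ?_))
      (card_primes_Ico_two_pow_mul_le k)
    obtain ⟨hpP, rfl⟩ := mem_filter.mp hp
    exact mem_filter.mpr ⟨mem_Ico.mpr ⟨Nat.pow_log_le_self 2 (hP p hpP).ne_zero,
      Nat.lt_pow_succ_log_self one_lt_two p⟩, hP p hpP⟩
  have hterm : ∀ p ∈ F, (p : ℝ) ^ (-σ) ≤ (2 ^ k : ℝ) ^ (-σ) := fun p hp => by
    obtain ⟨hpP, rfl⟩ := mem_filter.mp hp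
    refine rpow_le_rpow_of_nonpos (by positivity) ?_ (neg_nonpos.mpr hσ)
    exact_mod_cast Nat.pow_log_le_self 2 (hP p hpP).ne_zero
  calc ∑ p ∈ F, (p : ℝ) ^ (-σ) ≤ #F * (2 ^ k : ℝ) ^ (-σ) := by
        simpa using sum_le_card_nsmul F _ _ hterm
    _ ≤ (2 ^ (k + 2) / k) * (2 ^ k : ℝ) ^ (-σ) := by
        gcongr
        rw [le_div_iff₀ hk0]
        exact_mod_cast hF
    _ = 4 * (2 ^ (1 - σ) : ℝ) ^ k / k := by
        rw [rpow_pow_comm zero_le_two, sub_eq_add_neg, rpow_add (by positivity), rpow_one]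
        ring

lemma pow_succ_sub_one_le {r : ℝ} (hr : 1 ≤ r) (n : ℕ) :
    r ^ (n + 1) - 1 ≤ (n + 1) * (r - 1) * r ^ n := by
  have hgeom : ∑ i ∈ range (n + 1), r ^ i ≤ (n + 1) * r ^ n := by
    simpa using sum_le_card_nsmul _ _ _ fun i hi =>
      pow_le_pow_right₀ hr (Nat.lt_succ_iff.mp (mem_range.mp hi))
  rw [← geom_sum_mul]
  nlinarith

-- `(r ^ k - 1) / k ≤ r ^ k - r ^ (k - 1)`, so the excess over the harmonic sum telescopes.
lemma sum_Icc_pow_div_le {r : ℝ} (hr : 1 ≤ r) (K : ℕ) :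
    ∑ k ∈ Icc 1 K, r ^ k / k ≤ ∑ k ∈ Icc 1 K, (k : ℝ)⁻¹ + (r ^ K - 1) := by
  induction K with
  | zero => simp
  | succ K ih =>
    rw [sum_Icc_succ_top (by omega), sum_Icc_succ_top (by omega)]
    have hK : (0 : ℝ) < K + 1 := by positivity
    have hstep := pow_succ_sub_one_le hr K
    have hnew : r ^ (K + 1) / ((K + 1 : ℕ) : ℝ) ≤
        ((K + 1 : ℕ) : ℝ)⁻¹ + (r ^ (K + 1) - r ^ K) := by
      push_cast
      rw [div_le_iff₀ hK, add_mul, inv_mul_cancel₀ hK.ne', pow_succ]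
      rw [pow_succ] at hstep
      linarith
    linarith

lemma sum_Icc_pow_div_le_one_add_log_add_pow {r : ℝ} (hr : 1 ≤ r) (K : ℕ) :
    ∑ k ∈ Icc 1 K, r ^ k / k ≤ 1 + log K + r ^ K := by
  have hharm := harmonic_le_one_add_log K
  rw [harmonic_eq_sum_Icc] at hharm
  push_cast at hharm
  linarith [sum_Icc_pow_div_le hr K]

lemma sum_primes_rpow_neg_le {σ : ℝ} (hσ₀ : 0 ≤ σ) (hσ₁ : σ ≤ 1) {Y : ℕ} {P : Finset ℕ}
    (hP : ∀ p ∈ P, p.Prime ∧ p ≤ Y) :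
    ∑ p ∈ P, (p : ℝ) ^ (-σ) ≤
      4 * (1 + log (Nat.log 2 Y) + (2 ^ (1 - σ) : ℝ) ^ Nat.log 2 Y) := by
  have hmaps : ∀ p ∈ P, Nat.log 2 p ∈ Icc 1 (Nat.log 2 Y) := fun p hp => mem_Icc.mpr
    ⟨Nat.log_pos one_lt_two (hP p hp).1.two_le, Nat.log_mono_right (hP p hp).2⟩
  have hr : (1 : ℝ) ≤ 2 ^ (1 - σ) := one_le_rpow one_le_two (by linarith)
  rw [← sum_fiberwise_of_maps_to hmaps]
  calc _ ≤ ∑ k ∈ Icc 1 (Nat.log 2 Y), 4 * (2 ^ (1 - σ) : ℝ) ^ k / k :=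
        sum_le_sum fun k hk => sum_primes_log_two_eq_rpow_neg_le hσ₀
          (fun p hp => (hP p hp).1) (mem_Icc.mp hk).1
    _ ≤ _ := by
        simp_rw [mul_div_assoc, ← mul_sum]
        gcongr
        exact sum_Icc_pow_div_le_one_add_log_add_pow hr _

theorem smoothCount_le_rpow_mul_exp {x : ℝ} (hx : 0 ≤ x) (y : ℝ) {σ : ℝ} (hσ₀ : 1 / 2 ≤ σ)
    (hσ₁ : σ ≤ 1) :
    (smoothCount x y : ℝ) ≤ x ^ σ *
      exp (16 * (1 + log (Nat.log 2 ⌊y⌋₊) + (2 ^ (1 - σ) : ℝ) ^ Nat.log 2 ⌊y⌋₊)) := by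
  have hP : ∀ p ∈ (⌊y⌋₊ + 1).primesBelow, p.Prime ∧ p ≤ ⌊y⌋₊ := fun p hp => by
    obtain ⟨hp, hprime⟩ := mem_filter.mp hp
    exact ⟨hprime, Nat.lt_succ_iff.mp (mem_range.mp hp)⟩
  calc (smoothCount x y : ℝ)
      ≤ x ^ σ * ∏ p ∈ (⌊y⌋₊ + 1).primesBelow, (1 - (p : ℝ) ^ (-σ))⁻¹ :=
        smoothCount_le_rpow_mul_prod_primesBelow hx y (by linarith)
    _ ≤ x ^ σ * exp (4 * ∑ p ∈ (⌊y⌋₊ + 1).primesBelow, (p : ℝ) ^ (-σ)) := by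
        gcongr
        refine prod_inv_one_sub_le_exp_sum (fun p _ => by positivity) fun p hp => ?_
        exact rpow_neg_le_three_quarters (by exact_mod_cast (hP p hp).1.two_le) hσ₀
    _ ≤ _ := by
        gcongr x ^ σ * exp ?_
        linarith [sum_primes_rpow_neg_le (by linarith) hσ₁ hP]

lemma natLog_two_floor_mul_log_two_le {y : ℝ} (hy : 1 ≤ y) :
    (Nat.log 2 ⌊y⌋₊ : ℝ) * log 2 ≤ log y := by
  rw [← log_pow]
  refine log_le_log (by positivity) ?_
  calc (2 : ℝ) ^ Nat.log 2 ⌊y⌋₊ ≤ ⌊y⌋₊ := by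
        exact_mod_cast Nat.pow_log_le_self 2 (Nat.floor_pos.mpr hy).ne'
    _ ≤ y := Nat.floor_le (by linarith)

lemma rankin_parameter_bounds {x y : ℝ} (hx : exp (exp (exp 96)) ≤ x) (hy₁ : log x ^ 2 ≤ y)
    (hy₂ : y ≤ exp (log x / log (log x))) :
    0 < log y ∧ 2 * log y ≤ log x ∧ log (log x) ≤ log x / log y ∧
      96 ≤ log (log x / log y) ∧ 2 * log (log x / log y) ≤ log y := by
  set L := log x
  set ℓ := log y
  have hL : exp (exp 96) ≤ L := (le_log_iff_exp_le ((exp_pos _).trans_le hx)).mpr hx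
  have hL₀ : 0 < L := (exp_pos _).trans_le hL
  have hlogL : exp 96 ≤ log L := (le_log_iff_exp_le hL₀).mpr hL
  have hlogL₂ : 2 ≤ log L := by linarith [add_one_le_exp 96]
  have hℓ₁ : 2 * log L ≤ ℓ := by
    have := log_le_log (by positivity) hy₁
    rwa [log_pow, Nat.cast_two] at this
  have hℓ₂ : ℓ * log L ≤ L := by
    have hy₀ : 0 < y := (by positivity : (0 : ℝ) < L ^ 2).trans_le hy₁
    have hℓ₂ : ℓ ≤ L / log L := (log_le_iff_le_exp hy₀).mpr hy₂
    rwa [le_div_iff₀ (by linarith)] at hℓ₂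
  have hℓ : 0 < ℓ := by linarith
  have hu₁ : log L ≤ L / ℓ := by rw [le_div_iff₀ hℓ]; linarith
  have hu₂ : L / ℓ ≤ L := div_le_self hL₀.le (by linarith)
  have hu₀ : 0 < L / ℓ := by positivity
  refine ⟨hℓ, by nlinarith, hu₁, ?_, ?_⟩
  · calc (96 : ℝ) = log (exp 96) := (log_exp 96).symm
      _ ≤ log (log L) := log_le_log (exp_pos _) hlogL
      _ ≤ log (L / ℓ) := log_le_log (by linarith) hu₁
  · linarith [log_le_log hu₀ hu₂]

lemma rankin_exponent_le {L ℓ u δ : ℝ} {K : ℕ} (hu : 0 < u) (hL : L = u * ℓ)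
    (hδ : δ * ℓ = log u) (hδ₀ : 0 ≤ δ) (hu96 : 96 ≤ log u) (hK : K * log 2 ≤ ℓ)
    (hlogK : log K ≤ u) :
    (1 - δ) * L + 16 * (1 + log K + (2 ^ δ : ℝ) ^ K) ≤ L + -(1 / 2) * u * log u := by
  have hpow : (2 ^ δ : ℝ) ^ K ≤ u := by
    rw [rpow_def_of_pos two_pos, ← exp_nat_mul, ← exp_log hu, ← hδ, exp_le_exp]
    nlinarith
  have hu₁ : 1 ≤ u := ((log_pos_iff hu.le).mp (by linarith)).le
  have hδL : δ * L = u * log u := by rw [hL, ← hδ]; ring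
  nlinarith [mul_le_mul_of_nonneg_left hu96 hu.le]

theorem stmt9 : ∃ x0 : ℝ, ∀ x : ℝ, x0 ≤ x → ∀ y : ℝ,
    Real.log x ^ 2 ≤ y → y ≤ Real.exp (Real.log x / Real.log (Real.log x)) →
    (smoothCount x y : ℝ) ≤
      x * Real.exp (-(1/2) * (Real.log x / Real.log y) *
        Real.log (Real.log x / Real.log y)) := by
  refine ⟨exp (exp (exp 96)), fun x hx y hy₁ hy₂ => ?_⟩
  obtain ⟨hℓ, hℓL, hlogL, hu96, hlogu⟩ := rankin_parameter_bounds hx hy₁ hy₂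
  have hx₀ : 0 < x := (exp_pos _).trans_le hx
  set L := log x
  set ℓ := log y
  set u := L / ℓ
  set K := Nat.log 2 ⌊y⌋₊
  set δ := log u / ℓ
  have hu₀ : 0 < u := div_pos (by linarith) hℓ
  have hK : (K : ℝ) * log 2 ≤ ℓ := natLog_two_floor_mul_log_two_le (by nlinarith)
  have hlogK : log K ≤ u := by
    rcases K.eq_zero_or_pos with hK₀ | hK₀
    · rw [hK₀, Nat.cast_zero, log_zero]
      positivity
    have hKL : (K : ℝ) ≤ L := by nlinarith [log_two_gt_d9, K.cast_nonneg (α := ℝ)]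
    exact (log_le_log (by exact_mod_cast hK₀) hKL).trans hlogL
  have hδ₀ : 0 ≤ δ := div_nonneg (by linarith) hℓ.le
  have hδ₁ : δ ≤ 1 / 2 := by rw [div_le_iff₀ hℓ]; linarith
  calc (smoothCount x y : ℝ)
      ≤ x ^ (1 - δ) * exp (16 * (1 + log K + (2 ^ (1 - (1 - δ)) : ℝ) ^ K)) :=
        smoothCount_le_rpow_mul_exp hx₀.le y (by linarith) (by linarith)
    _ = exp ((1 - δ) * L + 16 * (1 + log K + (2 ^ δ : ℝ) ^ K)) := by
        rw [rpow_def_of_pos hx₀, sub_sub_cancel, exp_add, mul_comm L]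
    _ ≤ exp (L + -(1 / 2) * u * log u) :=
        exp_le_exp.mpr <| rankin_exponent_le hu₀ (div_mul_cancel₀ L hℓ.ne').symm
          (div_mul_cancel₀ _ hℓ.ne') hδ₀ hu96 hK hlogK
    _ = _ := by rw [exp_add, exp_log hx₀]
end

section
/- Let α be a complex number. Define the arithmetic function v by v(n)/n = ∑_{dm=n} μ(d)·(σ(m)/φ(m))^{α/2} (the power taken as exp((α/2)·log(σ(m)/φ(m))) with the real logarithm of the positive real number σ(m)/φ(m)), and define b(n) = ∑_{dm=n} τ_{−α}(d)·v(m), where τ_{−α} is the multiplicative function with τ_{−α}(p^ν) = binom(−α+ν−1, ν) on prime powers. Then the series ∑_{n=1}^∞ |b(n)|/n^σ converges for every real σ > 1/2. -/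
/-- The generalized divisor function `τ_α`, the multiplicative function with
`τ_α(p^ν) = binom (α+ν-1) ν = (∏_{ℓ=1}^ν (α+ℓ-1)) / ν!` on prime powers. -/
noncomputable def tauC (α : ℂ) (n : ℕ) : ℂ :=
  ∏ p ∈ n.primeFactors,
    (∏ ℓ ∈ Finset.range (n.factorization p), (α + ℓ)) /
      (Nat.factorial (n.factorization p))

/-- The function `v` with `v(n)/n = ∑_{dm=n} μ(d) (σ(m)/φ(m))^{α/2}`, the power
taken as `exp((α/2) log(σ(m)/φ(m)))` with the real logarithm. -/
noncomputable def vfun (α : ℂ) (n : ℕ) : ℂ :=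
  (n : ℂ) * ∑ de ∈ n.divisorsAntidiagonal,
    (ArithmeticFunction.moebius de.1 : ℂ) *
      Complex.exp ((α / 2) *
        (Real.log ((ArithmeticFunction.sigma 1 de.2 : ℝ) / (Nat.totient de.2)) : ℂ))

/-- `b(n) = ∑_{dm=n} τ_{-α}(d) v(m)`. -/
noncomputable def bfun (α : ℂ) (n : ℕ) : ℂ :=
  ∑ dm ∈ n.divisorsAntidiagonal, tauC (-α) dm.1 * vfun α dm.2


/-!
Since `b = τ_{-α} ⋆ v` is multiplicative, the Euler product reduces the claim to bounding the
local factors `∑ₖ |b(pᵏ)| p^{-kσ}`. On prime powers `|τ_{-α}(pᵏ)|` grows polynomially in `k`, and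
`v(pʲ) = pʲ ((σ/φ)(pʲ)^{α/2} - (σ/φ)(p^{j-1})^{α/2})` stays bounded because `log (σ/φ)(pʲ)` moves
by only `O(p^{-j})` from `j - 1` to `j`; hence `|b(pᵏ)| ≪ (k + 1)^M`. At `k = 1` there is a
cancellation: `b(p) = v(p) - α` and `v(p) = p (((p + 1)/(p - 1))^{α/2} - 1) = α + O(1/p)`, so
`|b(p)| ≪ 1/p`. Each local factor is therefore `1 + O(p^{-1-σ}) + O(p^{-2σ})`, and both error
terms are summable over primes since `σ > 1/2`.
-/

open Finset

lemma isMultiplicative_toArithmeticFunction {R : Type*} [MonoidWithZero R] {f : ℕ → R}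
    (h1 : f 1 = 1)
    (hmul : ∀ {m n : ℕ}, m ≠ 0 → n ≠ 0 → m.Coprime n → f (m * n) = f m * f n) :
    (toArithmeticFunction f).IsMultiplicative := by
  refine ⟨by simp [toArithmeticFunction, h1], fun {m n} h => ?_⟩
  rcases eq_or_ne m 0 with rfl | hm
  · simp [toArithmeticFunction]
  rcases eq_or_ne n 0 with rfl | hn
  · simp [toArithmeticFunction]
  simp [toArithmeticFunction, hm, hn, hmul hm hn h]

section Tau

lemma tauC_prime_pow (β : ℂ) {p : ℕ} (hp : p.Prime) (k : ℕ) :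
    tauC β (p ^ k) = (∏ ℓ ∈ range k, (β + ℓ)) / k.factorial := by
  rcases eq_or_ne k 0 with rfl | hk
  · simp [tauC]
  simp [tauC, Nat.primeFactors_prime_pow hk hp, hp.factorization_self]

lemma tauC_one (β : ℂ) : tauC β 1 = 1 := by
  simp [tauC]

lemma tauC_prime (β : ℂ) {p : ℕ} (hp : p.Prime) : tauC β p = β := by
  simpa using tauC_prime_pow β hp 1

lemma tauC_mul (β : ℂ) {m n : ℕ} (hm : m ≠ 0) (hn : n ≠ 0) (h : m.Coprime n) :
    tauC β (m * n) = tauC β m * tauC β n := by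
  unfold tauC
  rw [Nat.primeFactors_mul hm hn, prod_union h.disjoint_primeFactors, Nat.factorization_mul hm hn]
  congr 1 <;> refine prod_congr rfl fun p hp => ?_ <;> simp only [Finsupp.add_apply]
  · rw [Nat.factorization_eq_zero_of_not_dvd fun hpn =>
      (Nat.prime_of_mem_primeFactors hp).not_dvd_one
        (h ▸ Nat.dvd_gcd (Nat.dvd_of_mem_primeFactors hp) hpn), add_zero]
  · rw [Nat.factorization_eq_zero_of_not_dvd fun hpm =>
      (Nat.prime_of_mem_primeFactors hp).not_dvd_one
        (h ▸ Nat.dvd_gcd hpm (Nat.dvd_of_mem_primeFactors hp)), zero_add]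

lemma isMultiplicative_tauC (β : ℂ) : (toArithmeticFunction (tauC β)).IsMultiplicative :=
  isMultiplicative_toArithmeticFunction (tauC_one β) (tauC_mul β)

/-- Bernoulli's inequality `(1 + 1/x)^m ≥ 1 + m/x`, cleared of denominators. -/
lemma add_mul_pow_le_mul_add_one_pow {x : ℝ} (hx : 0 < x) (m : ℕ) :
    (x + m) * x ^ m ≤ x * (x + 1) ^ m := by
  have h := one_add_mul_le_pow (a := x⁻¹) (by linarith [inv_pos.2 hx]) m
  calc (x + m) * x ^ m = x * (1 + m * x⁻¹) * x ^ m := by field_simp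
    _ ≤ x * (1 + x⁻¹) ^ m * x ^ m := by gcongr
    _ = x * (x + 1) ^ m := by rw [mul_assoc, ← mul_pow]; field_simp

lemma prod_range_add_le {a : ℝ} (ha : 0 ≤ a) {m : ℕ} (ham : a ≤ m) (i : ℕ) :
    ∏ ℓ ∈ range i, (a + ℓ) ≤ i.factorial * ((i : ℝ) + 1) ^ m := by
  induction i with
  | zero => simp
  | succ i ih =>
    have hi : (0 : ℝ) < i + 1 := by positivity
    calc ∏ ℓ ∈ range (i + 1), (a + ℓ)
        ≤ i.factorial * ((i : ℝ) + 1) ^ m * ((i + 1) + m) := by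
          rw [prod_range_succ]
          exact mul_le_mul ih (by linarith) (by positivity) (by positivity)
      _ = i.factorial * ((((i : ℝ) + 1) + m) * ((i : ℝ) + 1) ^ m) := by ring
      _ ≤ i.factorial * (((i : ℝ) + 1) * ((i + 1) + 1) ^ m) :=
          mul_le_mul_of_nonneg_left (add_mul_pow_le_mul_add_one_pow hi m) (by positivity)
      _ = (i + 1).factorial * (((i + 1 : ℕ) : ℝ) + 1) ^ m := by
          push_cast [Nat.factorial_succ]; ring

lemma norm_tauC_prime_pow_le (β : ℂ) {p : ℕ} (hp : p.Prime) (i : ℕ) :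
    ‖tauC β (p ^ i)‖ ≤ ((i : ℝ) + 1) ^ ⌈‖β‖⌉₊ := by
  rw [tauC_prime_pow β hp, norm_div, Complex.norm_natCast,
    div_le_iff₀ (by positivity), mul_comm]
  calc ‖∏ ℓ ∈ range i, (β + ℓ)‖ ≤ ∏ ℓ ∈ range i, (‖β‖ + ℓ) := by
        refine (Finset.norm_prod_le _ _).trans
          (prod_le_prod (fun _ _ => norm_nonneg _) fun ℓ _ => ?_)
        simpa using norm_add_le β ℓ
    _ ≤ _ := prod_range_add_le (norm_nonneg β) (Nat.le_ceil _) i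

end Tau

section SigmaDivTotient

open scoped ArithmeticFunction.sigma

lemma le_sigma_one {m : ℕ} (hm : m ≠ 0) : m ≤ σ 1 m := by
  rw [ArithmeticFunction.sigma_one_apply]
  exact single_le_sum (fun i _ => Nat.zero_le i) (Nat.mem_divisors_self m hm)

lemma sigma_one_prime_pow_succ {p : ℕ} (hp : p.Prime) (j : ℕ) :
    σ 1 (p ^ (j + 1)) = p * σ 1 (p ^ j) + 1 := by
  simp only [ArithmeticFunction.sigma_one_apply_prime_pow hp, sum_range_succ' _ (j + 1),
    pow_zero, mul_sum, ← pow_succ']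

lemma sigma_one_prime_pow_le {p : ℕ} (hp : p.Prime) (t : ℕ) :
    (σ 1 (p ^ t) : ℝ) ≤ 2 * p ^ t := by
  have hgeom : (σ 1 (p ^ t) : ℝ) * (p - 1) = p ^ (t + 1) - 1 := by
    rw [ArithmeticFunction.sigma_one_apply_prime_pow hp]
    push_cast
    exact geom_sum_mul _ _
  have h2 : (2 : ℝ) ≤ p := by exact_mod_cast hp.two_le
  have hpt : (1 : ℝ) ≤ p ^ t := one_le_pow₀ (by linarith)
  nlinarith [pow_succ (p : ℝ) t]

lemma prime_pow_le_two_mul_totient {p : ℕ} (hp : p.Prime) (t : ℕ) :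
    (p : ℝ) ^ t ≤ 2 * (p ^ t).totient := by
  cases t with
  | zero => norm_num
  | succ t =>
    have h2 : (2 : ℝ) ≤ p := by exact_mod_cast hp.two_le
    rw [Nat.totient_prime_pow_succ hp, Nat.cast_mul, Nat.cast_sub hp.one_le, pow_succ]
    push_cast
    nlinarith [pow_pos (by linarith : (0 : ℝ) < p) t]

lemma sigma_div_totient_pos {m : ℕ} (hm : m ≠ 0) : 0 < (σ 1 m : ℝ) / m.totient :=
  div_pos (by exact_mod_cast (Nat.pos_of_ne_zero hm).trans_le (le_sigma_one hm))
    (by exact_mod_cast Nat.totient_pos.2 (Nat.pos_of_ne_zero hm))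

noncomputable def logSigmaDivTotient (m : ℕ) : ℝ :=
  Real.log ((σ 1 m : ℝ) / m.totient)

lemma logSigmaDivTotient_one : logSigmaDivTotient 1 = 0 := by
  simp [logSigmaDivTotient]

lemma logSigmaDivTotient_nonneg (m : ℕ) : 0 ≤ logSigmaDivTotient m := by
  rcases eq_or_ne m 0 with rfl | hm
  · simp [logSigmaDivTotient]
  have hφ : (0 : ℝ) < m.totient := by exact_mod_cast Nat.totient_pos.2 (Nat.pos_of_ne_zero hm)
  refine Real.log_nonneg ((one_le_div hφ).2 ?_)
  exact_mod_cast (Nat.totient_le m).trans (le_sigma_one hm)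

lemma logSigmaDivTotient_mul {m n : ℕ} (hm : m ≠ 0) (hn : n ≠ 0) (h : m.Coprime n) :
    logSigmaDivTotient (m * n) = logSigmaDivTotient m + logSigmaDivTotient n := by
  rw [logSigmaDivTotient, ArithmeticFunction.isMultiplicative_sigma.map_mul_of_coprime h,
    Nat.totient_mul h]
  push_cast
  rw [← div_mul_div_comm, Real.log_mul (sigma_div_totient_pos hm).ne'
    (sigma_div_totient_pos hn).ne']
  rfl

lemma logSigmaDivTotient_prime_pow_le {p : ℕ} (hp : p.Prime) (t : ℕ) :
    logSigmaDivTotient (p ^ t) ≤ 2 := by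
  have hpt := pow_ne_zero t hp.ne_zero
  have hφ : (0 : ℝ) < (p ^ t).totient := by
    exact_mod_cast Nat.totient_pos.2 (Nat.pos_of_ne_zero hpt)
  have hratio : (σ 1 (p ^ t) : ℝ) / (p ^ t).totient ≤ 4 := by
    rw [div_le_iff₀ hφ]
    linarith [sigma_one_prime_pow_le hp t, prime_pow_le_two_mul_totient hp t]
  have he : (4 : ℝ) ≤ Real.exp 2 := by
    rw [show (2 : ℝ) = 1 + 1 by norm_num, Real.exp_add]
    nlinarith [Real.add_one_le_exp (1 : ℝ)]
  rw [logSigmaDivTotient, Real.log_le_iff_le_exp (sigma_div_totient_pos hpt)]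
  exact hratio.trans he

lemma logSigmaDivTotient_prime {p : ℕ} (hp : p.Prime) :
    logSigmaDivTotient p = Real.log ((p + 1) / (p - 1)) := by
  have hσ : (σ 1 p : ℝ) = p + 1 := by
    simpa [add_comm] using congrArg (Nat.cast (R := ℝ)) (sigma_one_prime_pow_succ hp 0)
  rw [logSigmaDivTotient, hσ, Nat.totient_prime hp, Nat.cast_sub hp.one_le, Nat.cast_one]

lemma logSigmaDivTotient_prime_mem_Icc {p : ℕ} (hp : p.Prime) :
    logSigmaDivTotient p ∈ Set.Icc (2 / ((p : ℝ) + 1)) (2 / ((p : ℝ) - 1)) := by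
  have h2 : (2 : ℝ) ≤ p := by exact_mod_cast hp.two_le
  have hp1 : (p : ℝ) - 1 ≠ 0 := by linarith
  have hq : (0 : ℝ) < (p + 1) / (p - 1) := div_pos (by linarith) (by linarith)
  rw [logSigmaDivTotient_prime hp]
  constructor
  · calc 2 / ((p : ℝ) + 1) = 1 - (((p : ℝ) + 1) / (p - 1))⁻¹ := by
          field_simp; ring
      _ ≤ _ := Real.one_sub_inv_le_log_of_pos hq
  · calc _ ≤ ((p : ℝ) + 1) / (p - 1) - 1 := Real.log_le_sub_one_of_pos hq
      _ = 2 / (p - 1) := by field_simp; ring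

lemma logSigmaDivTotient_prime_pow_succ {p : ℕ} (hp : p.Prime) {j : ℕ} (hj : j ≠ 0) :
    logSigmaDivTotient (p ^ (j + 1)) =
      logSigmaDivTotient (p ^ j) + Real.log (1 + 1 / (p * σ 1 (p ^ j))) := by
  have hpj := pow_ne_zero j hp.ne_zero
  have hp0 : (0 : ℝ) < p := by exact_mod_cast hp.pos
  have hφsucc : (p ^ (j + 1)).totient = p * (p ^ j).totient := by
    rw [pow_succ', Nat.totient_mul_of_prime_of_dvd hp (dvd_pow_self p hj)]
  rw [logSigmaDivTotient, logSigmaDivTotient, ← Real.log_mul (sigma_div_totient_pos hpj).ne'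
    (by positivity), sigma_one_prime_pow_succ hp, hφsucc]
  congr 1
  push_cast
  field_simp

lemma abs_logSigmaDivTotient_prime_pow_succ_sub_le {p : ℕ} (hp : p.Prime) (j : ℕ) :
    |logSigmaDivTotient (p ^ (j + 1)) - logSigmaDivTotient (p ^ j)| ≤ 4 / p ^ (j + 1) := by
  have h2 : (2 : ℝ) ≤ p := by exact_mod_cast hp.two_le
  rcases eq_or_ne j 0 with rfl | hj
  · obtain ⟨-, hhi⟩ := logSigmaDivTotient_prime_mem_Icc hp
    simp only [zero_add, pow_one, pow_zero]
    rw [logSigmaDivTotient_one, sub_zero, abs_of_nonneg (logSigmaDivTotient_nonneg p)]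
    calc _ ≤ 2 / ((p : ℝ) - 1) := hhi
      _ ≤ 4 / p := by rw [div_le_div_iff₀ (by linarith) (by linarith)]; linarith
  have hpj := pow_ne_zero j hp.ne_zero
  have hσ : (p : ℝ) ^ j ≤ σ 1 (p ^ j) := by exact_mod_cast le_sigma_one hpj
  have hx : (0 : ℝ) < 1 / (p * σ 1 (p ^ j)) := by
    have : (0 : ℝ) < p ^ j := by positivity
    positivity
  rw [logSigmaDivTotient_prime_pow_succ hp hj, add_sub_cancel_left,
    abs_of_nonneg (Real.log_nonneg (by linarith))]
  calc _ ≤ 1 / (p * σ 1 (p ^ j) : ℝ) := by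
        linarith [Real.log_le_sub_one_of_pos (by linarith : (0 : ℝ) < 1 + 1 / (p * σ 1 (p ^ j)))]
    _ ≤ 1 / p ^ (j + 1) := by
        rw [pow_succ']
        gcongr
    _ ≤ 4 / p ^ (j + 1) := by gcongr; norm_num

end SigmaDivTotient

section VFun

open scoped ArithmeticFunction.Moebius

noncomputable def sigmaDivTotientCpow (α : ℂ) (m : ℕ) : ℂ :=
  Complex.exp (α / 2 * logSigmaDivTotient m)

lemma sigmaDivTotientCpow_one (α : ℂ) : sigmaDivTotientCpow α 1 = 1 := by
  simp [sigmaDivTotientCpow, logSigmaDivTotient_one]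

lemma sigmaDivTotientCpow_mul (α : ℂ) {m n : ℕ} (hm : m ≠ 0) (hn : n ≠ 0)
    (h : m.Coprime n) :
    sigmaDivTotientCpow α (m * n) = sigmaDivTotientCpow α m * sigmaDivTotientCpow α n := by
  simp only [sigmaDivTotientCpow, logSigmaDivTotient_mul hm hn h, Complex.ofReal_add, mul_add,
    Complex.exp_add]

lemma norm_exp_mul_ofReal_le (z : ℂ) (x : ℝ) :
    ‖Complex.exp (z * x)‖ ≤ Real.exp (‖z‖ * |x|) := by
  simpa using Complex.norm_exp_le_exp_norm (z * x)

lemma norm_sigmaDivTotientCpow_prime_pow_le (α : ℂ) {p : ℕ} (hp : p.Prime) (t : ℕ) :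
    ‖sigmaDivTotientCpow α (p ^ t)‖ ≤ Real.exp ‖α‖ := by
  refine (norm_exp_mul_ofReal_le _ _).trans (Real.exp_le_exp.2 ?_)
  rw [abs_of_nonneg (logSigmaDivTotient_nonneg _), norm_div, Complex.norm_ofNat]
  nlinarith [logSigmaDivTotient_prime_pow_le hp t, norm_nonneg α]

lemma sum_moebius_mul_prime_pow_succ {R : Type*} [CommRing R] (f : ℕ → R) {p : ℕ}
    (hp : p.Prime) (k : ℕ) :
    ∑ x ∈ (p ^ (k + 1)).divisorsAntidiagonal, (μ x.1 : R) * f x.2 =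
      f (p ^ (k + 1)) - f (p ^ k) := by
  rw [Nat.sum_divisorsAntidiagonal (fun d e => (μ d : R) * f e), Nat.sum_divisors_prime_pow hp,
    sum_range_succ', sum_range_succ']
  have hvanish : ∀ i ∈ range k,
      (μ (p ^ (i + 1 + 1)) : R) * f (p ^ (k + 1) / p ^ (i + 1 + 1)) = 0 :=
    fun i _ => by simp [ArithmeticFunction.moebius_apply_prime_pow hp]
  rw [sum_eq_zero hvanish, Nat.pow_div (by omega) hp.pos]
  simp [ArithmeticFunction.moebius_apply_prime hp, sub_eq_neg_add]

lemma vfun_prime_pow_succ (α : ℂ) {p : ℕ} (hp : p.Prime) (j : ℕ) :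
    vfun α (p ^ (j + 1)) = (p : ℂ) ^ (j + 1) *
      (sigmaDivTotientCpow α (p ^ (j + 1)) - sigmaDivTotientCpow α (p ^ j)) := by
  rw [vfun, ← sum_moebius_mul_prime_pow_succ _ hp]
  push_cast
  rfl

lemma norm_vfun_prime_pow_succ_le (α : ℂ) {p : ℕ} (hp : p.Prime) (j : ℕ) :
    ‖vfun α (p ^ (j + 1))‖ ≤ 2 * ‖α‖ * Real.exp (2 * ‖α‖) := by
  have hpj : (2 : ℝ) ≤ (p : ℝ) ^ (j + 1) := by
    exact_mod_cast hp.two_le.trans (Nat.le_self_pow (Nat.succ_ne_zero j) p)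
  set u : ℂ :=
    α / 2 * ((logSigmaDivTotient (p ^ (j + 1)) - logSigmaDivTotient (p ^ j) : ℝ) : ℂ)
  have hu : ‖u‖ ≤ 2 * ‖α‖ / (p : ℝ) ^ (j + 1) := by
    rw [norm_mul, Complex.norm_real, Real.norm_eq_abs, norm_div, Complex.norm_ofNat]
    calc ‖α‖ / 2 * |_| ≤ ‖α‖ / 2 * (4 / (p : ℝ) ^ (j + 1)) :=
          mul_le_mul_of_nonneg_left (abs_logSigmaDivTotient_prime_pow_succ_sub_le hp j)
            (by positivity)
      _ = 2 * ‖α‖ / (p : ℝ) ^ (j + 1) := by ring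
  have hu' : ‖u‖ ≤ ‖α‖ :=
    hu.trans (by rw [div_le_iff₀ (by positivity)]; nlinarith [norm_nonneg α])
  have hsplit : sigmaDivTotientCpow α (p ^ (j + 1)) - sigmaDivTotientCpow α (p ^ j) =
      sigmaDivTotientCpow α (p ^ j) * (Complex.exp u - 1) := by
    rw [sigmaDivTotientCpow, sigmaDivTotientCpow, mul_sub, mul_one, ← Complex.exp_add]
    congr 2
    simp only [u, Complex.ofReal_sub]
    ring
  have hexp : ‖Complex.exp u - 1‖ ≤ ‖u‖ * Real.exp ‖u‖ := by
    simpa using Complex.norm_exp_sub_sum_le_norm_mul_exp u 1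
  rw [vfun_prime_pow_succ α hp, hsplit, norm_mul, norm_mul, norm_pow, Complex.norm_natCast]
  calc (p : ℝ) ^ (j + 1) * (‖sigmaDivTotientCpow α (p ^ j)‖ * ‖Complex.exp u - 1‖)
      ≤ (p : ℝ) ^ (j + 1) *
          (Real.exp ‖α‖ * (2 * ‖α‖ / (p : ℝ) ^ (j + 1) * Real.exp ‖α‖)) := by
        gcongr
        · exact norm_sigmaDivTotientCpow_prime_pow_le α hp j
        · exact hexp.trans (by gcongr)
    _ = 2 * ‖α‖ * Real.exp (2 * ‖α‖) := by
        rw [two_mul ‖α‖, Real.exp_add]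
        field_simp

lemma norm_vfun_prime_pow_le (α : ℂ) {p : ℕ} (hp : p.Prime) (j : ℕ) :
    ‖vfun α (p ^ j)‖ ≤ max 1 (2 * ‖α‖ * Real.exp (2 * ‖α‖)) := by
  cases j with
  | zero => simp [vfun]
  | succ j => exact (norm_vfun_prime_pow_succ_le α hp j).trans (le_max_right _ _)

lemma vfun_eq_pmul (α : ℂ) :
    vfun α = ⇑(((ArithmeticFunction.id : ArithmeticFunction ℕ) : ArithmeticFunction ℂ).pmul
      ((μ : ArithmeticFunction ℂ) * toArithmeticFunction (sigmaDivTotientCpow α))) := by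
  ext n
  rw [ArithmeticFunction.pmul_apply, ArithmeticFunction.natCoe_apply, ArithmeticFunction.id_apply,
    ArithmeticFunction.mul_apply, vfun]
  congr 1
  refine sum_congr rfl fun de hde => ?_
  simp [toArithmeticFunction, Nat.right_ne_zero_of_mem_divisorsAntidiagonal hde,
    sigmaDivTotientCpow, logSigmaDivTotient]

lemma isMultiplicative_vfun (α : ℂ) : (toArithmeticFunction (vfun α)).IsMultiplicative := by
  rw [vfun_eq_pmul, ArithmeticFunction.toArithmeticFunction_eq_self]
  exact ArithmeticFunction.isMultiplicative_id.natCast.pmul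
    (ArithmeticFunction.isMultiplicative_moebius.intCast.mul
      (isMultiplicative_toArithmeticFunction (sigmaDivTotientCpow_one α)
        (sigmaDivTotientCpow_mul α)))

end VFun

section BFun

open scoped LSeries.notation

lemma bfun_eq_convolution (α : ℂ) : bfun α = tauC (-α) ⍟ vfun α := by
  rw [LSeries.convolution_def]
  rfl

lemma bfun_one (α : ℂ) : bfun α 1 = 1 := by
  simp [bfun, tauC_one, vfun]

lemma bfun_mul (α : ℂ) {m n : ℕ} (h : m.Coprime n) :
    bfun α (m * n) = bfun α m * bfun α n := by
  rw [bfun_eq_convolution, LSeries.convolution]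
  exact ((isMultiplicative_tauC (-α)).mul (isMultiplicative_vfun α)).map_mul_of_coprime h

lemma bfun_prime_pow (α : ℂ) {p : ℕ} (hp : p.Prime) (k : ℕ) :
    bfun α (p ^ k) = ∑ i ∈ range (k + 1), tauC (-α) (p ^ i) * vfun α (p ^ (k - i)) := by
  rw [bfun, Nat.sum_divisorsAntidiagonal (fun d e => tauC (-α) d * vfun α e),
    Nat.sum_divisors_prime_pow hp]
  refine sum_congr rfl fun i hi => ?_
  rw [Nat.pow_div (Nat.lt_succ_iff.1 (mem_range.1 hi)) hp.pos]

lemma norm_bfun_prime_pow_le (α : ℂ) {p : ℕ} (hp : p.Prime) (k : ℕ) :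
    ‖bfun α (p ^ k)‖ ≤
      max 1 (2 * ‖α‖ * Real.exp (2 * ‖α‖)) * ((k : ℝ) + 1) ^ (⌈‖α‖⌉₊ + 1) := by
  rw [bfun_prime_pow α hp]
  refine (norm_sum_le _ _).trans ?_
  calc ∑ i ∈ range (k + 1), ‖tauC (-α) (p ^ i) * vfun α (p ^ (k - i))‖
      ≤ ∑ i ∈ range (k + 1),
          ((k : ℝ) + 1) ^ ⌈‖α‖⌉₊ * max 1 (2 * ‖α‖ * Real.exp (2 * ‖α‖)) := by
        refine sum_le_sum fun i hi => ?_
        have hik : (i : ℝ) ≤ k := by exact_mod_cast Nat.lt_succ_iff.1 (mem_range.1 hi)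
        rw [norm_mul]
        gcongr
        · exact (norm_tauC_prime_pow_le (-α) hp i).trans (by rw [norm_neg]; gcongr)
        · exact norm_vfun_prime_pow_le α hp _
    _ = _ := by rw [sum_const, card_range, nsmul_eq_mul]; push_cast; ring

lemma bfun_prime (α : ℂ) {p : ℕ} (hp : p.Prime) : bfun α p = vfun α p - α := by
  simpa [sum_range_succ, tauC_one, tauC_prime _ hp, vfun, sub_eq_add_neg, add_comm]
    using bfun_prime_pow α hp 1

lemma norm_bfun_prime_le (α : ℂ) {p : ℕ} (hp : p.Prime) :
    ‖bfun α p‖ ≤ (4 * ‖α‖ ^ 2 * Real.exp ‖α‖ + 2 * ‖α‖) / p := by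
  have h2 : (2 : ℝ) ≤ p := by exact_mod_cast hp.two_le
  have hp1 : (p : ℝ) - 1 ≠ 0 := by linarith
  set r := logSigmaDivTotient p
  obtain ⟨hlo, hhi⟩ := logSigmaDivTotient_prime_mem_Icc hp
  have hL0 : 0 ≤ r := logSigmaDivTotient_nonneg p
  have hinv : 2 / ((p : ℝ) - 1) ≤ 4 / p := by
    rw [div_le_div_iff₀ (by linarith) (by linarith)]; linarith
  set u : ℂ := α / 2 * r
  have hu : ‖u‖ = ‖α‖ / 2 * r := by
    rw [norm_mul, Complex.norm_real, Real.norm_eq_abs, abs_of_nonneg hL0, norm_div,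
      Complex.norm_ofNat]
  -- `p r → 2`, so the linear term `p u` of `p (e^u - 1)` nearly cancels `α`
  have hdecomp : bfun α p = p * (Complex.exp u - 1 - u) + α / 2 * ((p * r - 2 : ℝ) : ℂ) := by
    have hv := vfun_prime_pow_succ α hp 0
    rw [zero_add, pow_one, pow_zero, sigmaDivTotientCpow_one] at hv
    rw [bfun_prime α hp, hv, sigmaDivTotientCpow]
    push_cast
    ring
  have hquad :
      ‖(p : ℂ) * (Complex.exp u - 1 - u)‖ ≤ 4 * ‖α‖ ^ 2 * Real.exp ‖α‖ / p := by
    have hexp : ‖Complex.exp u - 1 - u‖ ≤ ‖u‖ ^ 2 * Real.exp ‖u‖ := by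
      simpa [sum_range_succ, sub_sub] using Complex.norm_exp_sub_sum_le_norm_mul_exp u 2
    have hu1 : ‖u‖ ≤ 2 * ‖α‖ / p := by
      rw [hu]
      calc ‖α‖ / 2 * r ≤ ‖α‖ / 2 * (4 / p) := by gcongr; exact hhi.trans hinv
        _ = 2 * ‖α‖ / p := by ring
    have hu2 : ‖u‖ ≤ ‖α‖ := by
      have hr2 : r ≤ 2 := hhi.trans ((div_le_iff₀ (by linarith)).2 (by linarith))
      calc ‖u‖ = ‖α‖ / 2 * r := hu
        _ ≤ ‖α‖ / 2 * 2 := by gcongr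
        _ = ‖α‖ := by ring
    rw [norm_mul, Complex.norm_natCast]
    calc (p : ℝ) * ‖Complex.exp u - 1 - u‖
        ≤ p * ((2 * ‖α‖ / p) ^ 2 * Real.exp ‖α‖) := by
          gcongr
          exact hexp.trans (by gcongr)
      _ = 4 * ‖α‖ ^ 2 * Real.exp ‖α‖ / p := by field_simp; ring
  have hlin : ‖α / 2 * ((p * r - 2 : ℝ) : ℂ)‖ ≤ 2 * ‖α‖ / p := by
    have habs : |(p : ℝ) * r - 2| ≤ 4 / p := by
      have hup : (p : ℝ) * r ≤ 2 + 2 / ((p : ℝ) - 1) := by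
        calc (p : ℝ) * r ≤ p * (2 / (p - 1)) := by gcongr
          _ = 2 + 2 / ((p : ℝ) - 1) := by field_simp; ring
      have hdown : 2 - 2 / ((p : ℝ) + 1) ≤ p * r := by
        calc 2 - 2 / ((p : ℝ) + 1) = p * (2 / (p + 1)) := by field_simp; ring
          _ ≤ p * r := by gcongr
      have : 2 / ((p : ℝ) + 1) ≤ 2 / ((p : ℝ) - 1) := by gcongr <;> linarith
      rw [abs_le]; constructor <;> linarith
    rw [norm_mul, Complex.norm_real, Real.norm_eq_abs, norm_div, Complex.norm_ofNat]
    calc ‖α‖ / 2 * |(p : ℝ) * r - 2| ≤ ‖α‖ / 2 * (4 / p) := by gcongr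
      _ = 2 * ‖α‖ / p := by ring
  rw [hdecomp, add_div]
  exact (norm_add_le _ _).trans (add_le_add hquad hlin)

end BFun

section EulerProduct

lemma summable_add_pow_mul_geometric (M c : ℕ) {r : ℝ} (hr0 : 0 < r) (hr1 : r < 1) :
    Summable (fun k : ℕ => ((k : ℝ) + c) ^ M * r ^ k) := by
  have hshift : Summable (fun k : ℕ => ((k + c : ℕ) : ℝ) ^ M * r ^ (k + c)) :=
    (summable_nat_add_iff (f := fun n : ℕ => (n : ℝ) ^ M * r ^ n) c).2
      (summable_pow_mul_geometric_of_norm_lt_one M (by rwa [Real.norm_of_nonneg hr0.le]))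
  refine (hshift.mul_right (r ^ c)⁻¹).congr fun k => ?_
  rw [pow_add, Nat.cast_add]
  field_simp

theorem summable_of_summable_tsum_prime_pow {F : ℕ → ℝ} (hF : ∀ n, 0 ≤ F n)
    (hF0 : F 0 = 0) (hF1 : F 1 = 1) (hmul : ∀ {m n : ℕ}, m.Coprime n → F (m * n) = F m * F n)
    (hloc : ∀ {p : ℕ}, p.Prime → Summable (fun k => F (p ^ k)))
    (hprimes : Summable (fun p : Nat.Primes => ∑' k, F ((p : ℕ) ^ (k + 1)))) : Summable F := by
  refine summable_of_sum_range_le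
    (c := Real.exp (∑' p : Nat.Primes, ∑' k, F ((p : ℕ) ^ (k + 1)))) hF fun N => ?_
  obtain ⟨hsmooth, hprod⟩ :=
    EulerProduct.summable_and_hasSum_smoothNumbers_prod_primesBelow_tsum hF1 hmul
      (fun hp => by simpa only [Real.norm_of_nonneg (hF _)] using hloc hp) N
  have hind : Summable (N.smoothNumbers.indicator F) :=
    summable_subtype_iff_indicator.1 (hsmooth.congr fun m => Real.norm_of_nonneg (hF _))
  have hprimesBelow : ∑ p ∈ N.primesBelow, ∑' k, F (p ^ (k + 1)) ≤
      ∑' p : Nat.Primes, ∑' k, F ((p : ℕ) ^ (k + 1)) := by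
    rw [← sum_subtype_of_mem _ fun p => Nat.prime_of_mem_primesBelow]
    exact Summable.sum_le_tsum (ι := Nat.Primes) _ (fun p _ => tsum_nonneg fun k => hF _) hprimes
  calc ∑ i ∈ range N, F i = ∑ i ∈ range N, N.smoothNumbers.indicator F i := by
        refine sum_congr rfl fun i hi => ?_
        rcases eq_or_ne i 0 with rfl | hi0
        · simp [Set.indicator_apply, hF0]
        · rw [Set.indicator_of_mem (Nat.mem_smoothNumbers_of_lt (Nat.pos_of_ne_zero hi0)
            (mem_range.1 hi))]
    _ ≤ ∑' i, N.smoothNumbers.indicator F i :=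
        hind.sum_le_tsum _ fun i _ => Set.indicator_nonneg (fun n _ => hF n) i
    _ = ∏ p ∈ N.primesBelow, ∑' k, F (p ^ k) := by rw [← _root_.tsum_subtype, hprod.tsum_eq]
    _ ≤ ∏ p ∈ N.primesBelow, Real.exp (∑' k, F (p ^ (k + 1))) := by
        refine prod_le_prod (fun p _ => tsum_nonneg fun k => hF _) fun p hp => ?_
        rw [(hloc (Nat.prime_of_mem_primesBelow hp)).tsum_eq_zero_add, pow_zero, hF1, add_comm]
        exact Real.add_one_le_exp _
    _ = Real.exp (∑ p ∈ N.primesBelow, ∑' k, F (p ^ (k + 1))) := (Real.exp_sum _ _).symm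
    _ ≤ _ := Real.exp_le_exp.2 hprimesBelow

end EulerProduct

section DirichletSeries

variable {f : ℕ → ℂ} {A C σ : ℝ} {M : ℕ}

lemma norm_div_rpow_prime_pow_le
    (hpow : ∀ {p : ℕ}, p.Prime → ∀ k : ℕ, ‖f (p ^ k)‖ ≤ C * ((k : ℝ) + 1) ^ M)
    {p : ℕ} (hp : p.Prime) (k : ℕ) :
    ‖f (p ^ k)‖ / ((p ^ k : ℕ) : ℝ) ^ σ ≤
      C * (((k : ℝ) + 1) ^ M * ((p : ℝ) ^ σ)⁻¹ ^ k) := by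
  have hp0 : (0 : ℝ) < p := by exact_mod_cast hp.pos
  rw [Nat.cast_pow, ← Real.rpow_pow_comm hp0.le, inv_pow, ← mul_assoc, ← div_eq_mul_inv]
  gcongr
  exact hpow hp k

lemma inv_rpow_prime_lt_one {p : ℕ} (hp : p.Prime) (hσ : 0 < σ) : ((p : ℝ) ^ σ)⁻¹ < 1 :=
  inv_lt_one_of_one_lt₀ (Real.one_lt_rpow (by exact_mod_cast hp.one_lt) hσ)

lemma summable_norm_div_rpow_prime_pow
    (hpow : ∀ {p : ℕ}, p.Prime → ∀ k : ℕ, ‖f (p ^ k)‖ ≤ C * ((k : ℝ) + 1) ^ M)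
    (hσ : 0 < σ) {p : ℕ} (hp : p.Prime) :
    Summable (fun k => ‖f (p ^ k)‖ / ((p ^ k : ℕ) : ℝ) ^ σ) := by
  have hp0 : (0 : ℝ) < p := by exact_mod_cast hp.pos
  have hgeom := summable_add_pow_mul_geometric M 1 (by positivity) (inv_rpow_prime_lt_one hp hσ)
  exact (hgeom.mul_left C).of_nonneg_of_le (fun k => by positivity) fun k => by
    simpa using norm_div_rpow_prime_pow_le hpow hp k

lemma exists_tsum_norm_div_rpow_prime_pow_succ_le
    (hpow : ∀ {p : ℕ}, p.Prime → ∀ k : ℕ, ‖f (p ^ k)‖ ≤ C * ((k : ℝ) + 1) ^ M)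
    (hprime : ∀ {p : ℕ}, p.Prime → ‖f p‖ ≤ A / p) (hσ : 0 < σ) :
    ∃ B : ℝ, ∀ {p : ℕ}, p.Prime → ∑' k, ‖f (p ^ (k + 1))‖ / ((p ^ (k + 1) : ℕ) : ℝ) ^ σ ≤
      A * ((p : ℝ) ^ (1 + σ))⁻¹ + B * ((p : ℝ) ^ (2 * σ))⁻¹ := by
  refine ⟨C * ∑' k : ℕ, ((k : ℝ) + 3) ^ M * ((2 : ℝ) ^ σ)⁻¹ ^ k, fun {p} hp => ?_⟩
  have hp0 : (0 : ℝ) < p := by exact_mod_cast hp.pos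
  have hsum := summable_norm_div_rpow_prime_pow hpow hσ hp
  rw [((summable_nat_add_iff 1).2 hsum).tsum_eq_zero_add]
  refine add_le_add ?_ ?_
  · have hfirst : ‖f (p ^ (0 + 1))‖ / ((p ^ (0 + 1) : ℕ) : ℝ) ^ σ ≤ A / p / (p : ℝ) ^ σ := by
      simpa using div_le_div_of_nonneg_right (hprime hp) (by positivity : 0 ≤ (p : ℝ) ^ σ)
    refine hfirst.trans_eq ?_
    rw [Real.rpow_add hp0, Real.rpow_one]
    field_simp
  have hC : 0 ≤ C := (norm_nonneg _).trans ((hpow hp 0).trans_eq (by simp))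
  set x := ((p : ℝ) ^ σ)⁻¹
  set y := ((2 : ℝ) ^ σ)⁻¹
  have hxy : x ≤ y := inv_anti₀ (by positivity)
    (Real.rpow_le_rpow zero_le_two (by exact_mod_cast hp.two_le) hσ.le)
  -- the terms with `k ≥ 2` are dominated by `x ^ 2 = p ^ (-2σ)` times a fixed convergent series
  have hgeom :=
    summable_add_pow_mul_geometric M 3 (by positivity) (inv_rpow_prime_lt_one Nat.prime_two hσ)
  have hx2 : x ^ 2 = ((p : ℝ) ^ (2 * σ))⁻¹ := by
    rw [inv_pow, ← Real.rpow_natCast, ← Real.rpow_mul hp0.le, mul_comm]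
    norm_num
  rw [← hx2, mul_assoc, ← tsum_mul_right, ← tsum_mul_left]
  refine Summable.tsum_le_tsum (fun k => ?_)
    ((summable_nat_add_iff 1).2 ((summable_nat_add_iff 1).2 hsum)) ((hgeom.mul_right _).mul_left C)
  calc _ ≤ C * ((((k + 1 + 1 : ℕ) : ℝ) + 1) ^ M * x ^ (k + 1 + 1)) :=
        norm_div_rpow_prime_pow_le hpow hp _
    _ = C * (((k : ℝ) + 3) ^ M * x ^ k * x ^ 2) := by push_cast; ring
    _ ≤ C * (((k : ℝ) + 3) ^ M * y ^ k * x ^ 2) := by gcongr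

theorem summable_norm_div_rpow_of_prime_pow_le (hf1 : f 1 = 1)
    (hmul : ∀ {m n : ℕ}, m.Coprime n → f (m * n) = f m * f n)
    (hpow : ∀ {p : ℕ}, p.Prime → ∀ k : ℕ, ‖f (p ^ k)‖ ≤ C * ((k : ℝ) + 1) ^ M)
    (hprime : ∀ {p : ℕ}, p.Prime → ‖f p‖ ≤ A / p) (hσ : 1 / 2 < σ) :
    Summable (fun n : ℕ => ‖f n‖ / (n : ℝ) ^ σ) := by
  have hσ0 : 0 < σ := by linarith
  refine summable_of_summable_tsum_prime_pow (fun n => by positivity)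
    (by simp [Real.zero_rpow hσ0.ne']) (by simp [hf1]) (fun h => ?_)
    (summable_norm_div_rpow_prime_pow hpow hσ0) ?_
  · rw [hmul h, norm_mul, Nat.cast_mul, Real.mul_rpow (Nat.cast_nonneg _) (Nat.cast_nonneg _),
      mul_div_mul_comm]
  obtain ⟨B, htail⟩ := exists_tsum_norm_div_rpow_prime_pow_succ_le hpow hprime hσ0
  have hdom : Summable fun n : ℕ => A * ((n : ℝ) ^ (1 + σ))⁻¹ + B * ((n : ℝ) ^ (2 * σ))⁻¹ :=
    ((Real.summable_nat_rpow_inv.2 (by linarith)).mul_left _).add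
      ((Real.summable_nat_rpow_inv.2 (by linarith)).mul_left _)
  exact (hdom.comp_injective Subtype.val_injective).of_nonneg_of_le
    (fun p => tsum_nonneg fun k => by positivity) (fun p => htail p.2)

end DirichletSeries

theorem stmt15 (α : ℂ) (σ : ℝ) (hσ : 1/2 < σ) :
    Summable (fun n : ℕ => ‖bfun α n‖ / (n : ℝ) ^ σ) :=
  summable_norm_div_rpow_of_prime_pow_le (bfun_one α) (bfun_mul α) (norm_bfun_prime_pow_le α)
    (norm_bfun_prime_le α) hσ
end
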